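/- arXiv:1012.3244 — 4 statements merged into one kernel-verified Lean document; each statement's English description precedes it below -/
import Mathlib

section
/- Let G ≅ ℤ^k ⊕ ℤ_{n_1} ⊕ … ⊕ ℤ_{n_t} with n_{i+1} ∣ n_i, presented as F/R as below, and let 1 ≤ c_2 ≤ c_1 ≤ 2c_2. Then [γ_{c_1+1}(F), γ_{c_2+1}(F)] ≡ ⟨A⟩ (mod H), i.e. [γ_{c_1+1}(F), γ_{c_2+1}(F)]·H = ⟨A⟩·H, where A = {[β,α] : β, α basic commutators on X = {x_1,…,x_{k+t}} with β > α, wt(β) = c_1+1, wt(α) = c_2+1}. -/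
namespace PaperFormal

open Subgroup
open scoped commutatorElement

/-- The set of values of the words in `V` in the group `G`. -/
def wordValues {α : Type*} (V : Set (FreeGroup α)) (G : Type*) [Group G] : Set G :=
  {g | ∃ v ∈ V, ∃ f : α → G, FreeGroup.lift f v = g}

/-- The verbal subgroup `V(G)` of `G` with respect to a set of words `V`. -/
def verbal {α : Type*} (V : Set (FreeGroup α)) (G : Type*) [Group G] : Subgroup G :=
  Subgroup.closure (wordValues V G)

/-- The marginal set `V*(G)`: the set of `g ∈ G` such that replacing any single entry
`gᵢ` by `gᵢ * g` does not change the value of any word `v ∈ V`. -/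
def marginalSet {α : Type*} [DecidableEq α] (V : Set (FreeGroup α)) (G : Type*) [Group G] :
    Set G :=
  {g | ∀ v ∈ V, ∀ f : α → G, ∀ i : α,
    FreeGroup.lift (Function.update f i (f i * g)) v = FreeGroup.lift f v}

/-- The subgroup `[K V* G]`. -/
def KVstar {α : Type*} [DecidableEq α] (V : Set (FreeGroup α)) {G : Type*} [Group G]
    (K : Subgroup G) : Subgroup G :=
  Subgroup.closure {x | ∃ v ∈ V, ∃ f : α → G, ∃ i : α, ∃ r ∈ K,
    x = FreeGroup.lift (Function.update f i (f i * r)) v * (FreeGroup.lift f v)⁻¹}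

/-- The quotient group `A/B`, for subgroups `A B` of an ambient group (mathematically
meaningful when `B` is a subgroup of `A` normalized by `A`; we take the normal closure of
`B ∩ A` inside `A`, which equals `B` in that case). -/
abbrev quotBy {G : Type*} [Group G] (A B : Subgroup G) : Type _ :=
  ↥A ⧸ Subgroup.normalClosure ((B.subgroupOf A : Subgroup ↥A) : Set ↥A)

/-- The canonical projection onto `quotBy A B`. -/
def quotByMk {G : Type*} [Group G] {A : Subgroup G} (B : Subgroup G) (a : ↥A) :
    quotBy A B := QuotientGroup.mk a

/-- The natural homomorphism `A/B → A'/B'` when `A ≤ A'` and `B ≤ B'`. -/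
def quotByHom {G : Type*} [Group G] {A A' B B' : Subgroup G} (hA : A ≤ A') (hB : B ≤ B') :
    quotBy A B →* quotBy A' B' :=
  QuotientGroup.lift _ ((QuotientGroup.mk' _).comp (Subgroup.inclusion hA)) (by
    intro x hx
    have : x ∈ ((QuotientGroup.mk' (Subgroup.normalClosure
        ((B'.subgroupOf A' : Subgroup ↥A') : Set ↥A'))).comp (Subgroup.inclusion hA)).ker := by
      refine Subgroup.normalClosure_le_normal ?_ hx
      intro y hy
      simp only [SetLike.mem_coe, Subgroup.mem_subgroupOf] at hy
      simp only [SetLike.mem_coe, MonoidHom.mem_ker, MonoidHom.comp_apply,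
        QuotientGroup.mk'_apply]
      rw [QuotientGroup.eq_one_iff]
      refine Subgroup.subset_normalClosure ?_
      simp only [SetLike.mem_coe, Subgroup.mem_subgroupOf, Subgroup.coe_inclusion]
      exact hB hy
    exact this)

/-- The Baer invariant `𝔙M(G) = (R ∩ V(F))/[R V* F]` of `G ≅ F/R` with respect to the
set of words `V`. -/
abbrev BaerInv {α : Type*} [DecidableEq α] (V : Set (FreeGroup α)) {F : Type*} [Group F]
    (R : Subgroup F) : Type _ :=
  quotBy (R ⊓ verbal V F) (KVstar V R)

/-- The natural homomorphism `𝔙M(F/R) → 𝔙M(F/S)` for `R ≤ S`. -/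
def baerMap {α : Type*} [DecidableEq α] (V : Set (FreeGroup α)) {F : Type*} [Group F]
    {R S : Subgroup F} (h : R ≤ S) : BaerInv V R →* BaerInv V S :=
  quotByHom (inf_le_inf_right _ h) (Subgroup.closure_mono (by
    rintro x ⟨v, hv, f, i, r, hr, rfl⟩
    exact ⟨v, hv, f, i, r, h hr, rfl⟩))

/-- A group `G` is `V`-capable if `G ≅ E/V*(E)` for some group `E`; equivalently there
is a surjection `E → G` whose kernel is exactly the marginal subgroup `V*(E)`. -/
def VCapable {α : Type*} [DecidableEq α] (V : Set (FreeGroup α)) (G : Type*) [Group G] : Prop :=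
  ∃ (E : Type*) (_ : Group E) (φ : E →* G),
    Function.Surjective φ ∧ (φ.ker : Set E) = marginalSet V E

/-- A group `G` is capable if `G ≅ E/Z(E)` for some group `E`. -/
def Capable (G : Type*) [Group G] : Prop :=
  ∃ (E : Type*) (_ : Group E) (φ : E →* G),
    Function.Surjective φ ∧ φ.ker = Subgroup.center E

/-- A group `G` is `𝔑_c`-capable if `G ≅ E/Z_c(E)` for some group `E`. -/
def NCapable (c : ℕ) (G : Type*) [Group G] : Prop :=
  ∃ (E : Type*) (_ : Group E) (φ : E →* G),
    Function.Surjective φ ∧ φ.ker = Subgroup.upperCentralSeries E c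

/-- The nilpotency word `[…[[x₀,x₁],x₂],…,x_c]` defining the variety `𝔑_c`. -/
def nilpWord : ℕ → FreeGroup ℕ
  | 0 => FreeGroup.of 0
  | c + 1 => ⁅nilpWord c, FreeGroup.of (c + 1)⁆

/-- The outer commutator word `[[…[x₁,x₂],…,x_{c₁+1}], […[y₁,y₂],…,y_{c₂+1}]]`
(in `c₁+c₂+2` distinct variables) defining the variety `[𝔑_{c₁},𝔑_{c₂}]`. -/
def outerWord (c₁ c₂ : ℕ) : FreeGroup ℕ :=
  ⁅nilpWord c₁, FreeGroup.map (fun i => i + (c₁ + 1)) (nilpWord c₂)⁆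

/-- The solvability word `δ_ℓ` (on `2^ℓ` distinct variables) defining the variety `𝔖_ℓ`. -/
def deltaWord : ℕ → FreeGroup ℕ
  | 0 => FreeGroup.of 0
  | ℓ + 1 => ⁅deltaWord ℓ, FreeGroup.map (fun i => i + 2 ^ ℓ) (deltaWord ℓ)⁆

/-- `[R, F, F, …, F]` with `c` occurrences of `F`. -/
def iterBracket {G : Type*} [Group G] (R : Subgroup G) : ℕ → Subgroup G
  | 0 => R
  | c + 1 => ⁅iterBracket R c, (⊤ : Subgroup G)⁆

/-- Formal commutators on a set `X` of generators. -/
inductive FC (X : Type*) : Type _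
  | of : X → FC X
  | comm : FC X → FC X → FC X

namespace FC

/-- The weight of a formal commutator. -/
def wt {X : Type*} : FC X → ℕ
  | .of _ => 1
  | .comm a b => wt a + wt b

/-- The value of a formal commutator in the free group on `X`. -/
def val {X : Type*} : FC X → FreeGroup X
  | .of x => FreeGroup.of x
  | .comm a b => ⁅val a, val b⁆

/-- Whether the generator `x` occurs in a formal commutator. -/
def occurs {X : Type*} (x : X) : FC X → Prop
  | .of y => x = y
  | .comm a b => occurs x a ∨ occurs x b

/-- The standard ordering of (basic) commutators: first by weight, commutators of the
same weight being compared lexicographically in their two components. -/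
def cmp {X : Type*} [LinearOrder X] : FC X → FC X → Ordering
  | .of x, .of y => compare x y
  | .of x, .comm a b => (compare (wt (FC.of x)) (wt (FC.comm a b))).then .lt
  | .comm a b, .of y => (compare (wt (FC.comm a b)) (wt (FC.of y))).then .gt
  | .comm a b, .comm c d =>
      (compare (wt (FC.comm a b)) (wt (FC.comm c d))).then ((cmp a c).then (cmp b d))

/-- Basic commutators on a totally ordered set `X`: elements of `X` are basic of weight
one; `[cᵢ,cⱼ]` is basic provided `cᵢ, cⱼ` are basic, `cᵢ > cⱼ`, and if `cᵢ = [c_s,c_t]`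
then `cⱼ ≥ c_t`. -/
inductive IsBasic {X : Type*} [LinearOrder X] : FC X → Prop
  | of (x : X) : IsBasic (.of x)
  | comm {ci cj : FC X} : IsBasic ci → IsBasic cj → cmp cj ci = .lt →
      (∀ cs ct : FC X, ci = .comm cs ct → cmp cj ct ≠ .lt) → IsBasic (.comm ci cj)

end FC

/-- `Q` is a free abelian group with basis the subset `s ⊆ Q`. -/
def IsFreeAbelianWithBasis (Q : Type*) [Group Q] (s : Set Q) : Prop :=
  ∃ e : Q ≃* Multiplicative (FreeAbelianGroup s),
    ∀ (q : Q) (h : q ∈ s), e q = Multiplicative.ofAdd (FreeAbelianGroup.of (⟨q, h⟩ : s))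

/-- The Witt function `χ_n(d) = (1/n) ∑_{m ∣ n} μ(m) d^{n/m}`. -/
def chi (n d : ℕ) : ℕ :=
  ((∑ m ∈ n.divisors, (ArithmeticFunction.moebius m) * (d : ℤ) ^ (n / m)) / (n : ℤ)).toNat


/-! Setup for the free presentation of `G ≅ ℤ^k ⊕ ℤ_{n 0} ⊕ ⋯ ⊕ ℤ_{n (t-1)}`:
`F` is the free group on `x_0, …, x_{k+t-1}` and `R` is the (normal) subgroup of `F`
generated by `γ₂(F)` together with the elements `x_{k+i} ^ (n i)`. -/

/-- The index of the generator `x_{k+i}`. -/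
def xIdx (k t : ℕ) (i : Fin t) : Fin (k + t) := ⟨k + i, Nat.add_lt_add_left i.isLt k⟩

/-- The generator `x_{k+i}` of the free group `F`. -/
def xGen (k t : ℕ) (i : Fin t) : FreeGroup (Fin (k + t)) := FreeGroup.of (xIdx k t i)

/-- The subgroup `R` of `F`, generated by `γ₂(F)` and the `x_{k+i} ^ (n i)`; it is
automatically normal since it contains the commutator subgroup. -/
def Rsub (k t : ℕ) (n : Fin t → ℕ) : Subgroup (FreeGroup (Fin (k + t))) :=
  Subgroup.lowerCentralSeries (⊤ : Subgroup (FreeGroup (Fin (k + t)))) 1 ⊔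
    Subgroup.closure {g | ∃ i : Fin t, g = xGen k t i ^ n i}

/-- The cyclic subgroup `R_i = ⟨x_{k+i} ^ (n i)⟩`. -/
def Rcyc (k t : ℕ) (n : Fin t → ℕ) (i : Fin t) : Subgroup (FreeGroup (Fin (k + t))) :=
  Subgroup.closure {xGen k t i ^ n i}

/-- The subgroup `[γ_{c₁+1}(F), γ_{c₂+1}(F)]` (note `γ_{c+1}(F)` is
`lowerCentralSeries F c` in Mathlib's indexing). -/
def gammaComm (k t c₁ c₂ : ℕ) : Subgroup (FreeGroup (Fin (k + t))) :=
  ⁅Subgroup.lowerCentralSeries (⊤ : Subgroup (FreeGroup (Fin (k + t)))) c₁,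
   Subgroup.lowerCentralSeries (⊤ : Subgroup (FreeGroup (Fin (k + t)))) c₂⁆

/-- The product `[R, _{c₁}F, γ_{c₂+1}(F)]·[R, _{c₂}F, γ_{c₁+1}(F)]` (a product of two
normal subgroups, hence equal to their join). -/
def Psub (k t : ℕ) (n : Fin t → ℕ) (c₁ c₂ : ℕ) : Subgroup (FreeGroup (Fin (k + t))) :=
  ⁅iterBracket (Rsub k t n) c₁, Subgroup.lowerCentralSeries (⊤ : Subgroup (FreeGroup (Fin (k + t)))) c₂⁆ ⊔
  ⁅iterBracket (Rsub k t n) c₂, Subgroup.lowerCentralSeries (⊤ : Subgroup (FreeGroup (Fin (k + t)))) c₁⁆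

/-- `H = ([R, _{c₁}F, γ_{c₂+1}(F)]·[R, _{c₂}F, γ_{c₁+1}(F)]) ∩ γ_{c₁+c₂+3}(F)`. -/
def Hsub (k t : ℕ) (n : Fin t → ℕ) (c₁ c₂ : ℕ) : Subgroup (FreeGroup (Fin (k + t))) :=
  Psub k t n c₁ c₂ ⊓ Subgroup.lowerCentralSeries (⊤ : Subgroup (FreeGroup (Fin (k + t)))) (c₁ + c₂ + 2)

/-- The set `A` of commutators `[β,α]` of basic commutators `β > α` of weights
`c₁+1` and `c₂+1` respectively. -/
def Aset (k t c₁ c₂ : ℕ) : Set (FreeGroup (Fin (k + t))) :=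
  {g | ∃ β α : FC (Fin (k + t)), β.IsBasic ∧ α.IsBasic ∧ β.wt = c₁ + 1 ∧ α.wt = c₂ + 1 ∧
    FC.cmp α β = .lt ∧ g = ⁅β.val, α.val⁆}

/-! Write `γ_{n+1}` for `lowerCentralSeries ⊤ n`. Since `R ⊇ γ₂(F)`, the subgroup
`N = [γ_{c₁+2}, γ_{c₂+1}]·[γ_{c₁+1}, γ_{c₂+2}]` lies in `H`. Modulo `N` the commutator
`[γ_{c₁+1}, γ_{c₂+1}]` is central (three subgroups lemma), so the commutator map
`γ_{c₁+1} × γ_{c₂+1} → [γ_{c₁+1}, γ_{c₂+1}]N/N` is bilinear and only depends on its arguments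
modulo `γ_{c₁+2}` and `γ_{c₂+2}`. By Hall's basis theorem, `γ_{c+1}` is generated modulo `γ_{c+2}`
by the basic commutators of weight `c + 1`, so `[γ_{c₁+1}, γ_{c₂+1}]` is generated modulo `N` by
the `[β, α]` with `β, α` basic; when `β < α` the weights force `c₁ = c₂` and `[β, α] = [α, β]⁻¹`.

Hall's theorem follows from the collection step: for basic `b > a` of total weight `w`,
`[b, a]` lies in `⟨basic commutators of weight w⟩·γ_{w+1}`. Either `[b, a]` is itself basic, or
`b = [b₁, b₂]` with `a < b₂`, and the Jacobi identity modulo `γ_{w+1}` rewrites `[[b₁, b₂], a]`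
through `[b₂, [a, b₁]]` and `[b₁, [b₂, a]]`. These are handled by induction on the weight and,
within a weight, on the number of formal commutators above `a`. -/

local notation "lcs" => Subgroup.lowerCentralSeries ⊤

section GroupTheory

variable {G : Type*} [Group G]

theorem commutator_commutator_le_of_rotate {H₁ H₂ H₃ N : Subgroup G} [N.Normal]
    (h₁ : ⁅⁅H₂, H₃⁆, H₁⁆ ≤ N) (h₂ : ⁅⁅H₃, H₁⁆, H₂⁆ ≤ N) : ⁅⁅H₁, H₂⁆, H₃⁆ ≤ N := by
  rw [← QuotientGroup.ker_mk' N, ← Subgroup.map_eq_bot_iff] at h₁ h₂ ⊢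
  simp only [map_commutator] at h₁ h₂ ⊢
  exact commutator_commutator_eq_bot_of_rotate h₁ h₂

theorem commutator_lowerCentralSeries_le (m n : ℕ) :
    ⁅(lcs m : Subgroup G), (lcs n : Subgroup G)⁆ ≤ lcs (m + n + 1) := by
  induction n generalizing m with
  | zero => exact le_rfl
  | succ n ih =>
    rw [commutator_comm, Subgroup.lowerCentralSeries_succ]
    apply commutator_commutator_le_of_rotate
    · rw [commutator_comm ⊤]
      exact (ih (m + 1)).trans (Subgroup.lowerCentralSeries_antitone ⊤ (by omega))
    · exact commutator_mono (ih m) le_rfl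

theorem commutatorElement_mem_lowerCentralSeries {m n : ℕ} {x y : G} (hx : x ∈ lcs m)
    (hy : y ∈ lcs n) : ⁅x, y⁆ ∈ lcs (m + n + 1) :=
  commutator_lowerCentralSeries_le m n (commutator_mem_commutator hx hy)

theorem map_lowerCentralSeries_of_surjective {Q : Type*} [Group Q] {f : G →* Q}
    (hf : Function.Surjective f) (n : ℕ) : (lcs n : Subgroup G).map f = lcs n := by
  rw [map_lowerCentralSeries, map_top_of_surjective f hf]

theorem commutatorElement_mul_right_of_mem_center {a b c : G} (h : ⁅a, c⁆ ∈ center G) :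
    ⁅a, b * c⁆ = ⁅a, b⁆ * ⁅a, c⁆ := by
  rw [commutatorElement_mul_right_eq_mul_conj, mul_assoc _ b, mem_center_iff.mp h b]
  simp [mul_assoc]

theorem commutatorElement_inv_right_of_mem_center {a b : G} (h : ⁅a, b⁆ ∈ center G) :
    ⁅a, b⁻¹⁆ = ⁅a, b⁆⁻¹ := by
  rw [commutatorElement_inv_right, ← commutatorElement_inv, mem_center_iff.mp (inv_mem h) b⁻¹]
  simp

theorem commutatorElement_mem_of_mem_closure {x : G} {T : Set G} {K : Subgroup G}
    (hcenter : ∀ q ∈ closure T, ⁅x, q⁆ ∈ center G) (hT : ∀ t ∈ T, ⁅x, t⁆ ∈ K) {q : G}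
    (hq : q ∈ closure T) : ⁅x, q⁆ ∈ K := by
  induction hq using closure_induction with
  | mem t ht => exact hT t ht
  | one => simp
  | mul q q' _ hq' ihq ihq' =>
    rw [commutatorElement_mul_right_of_mem_center (hcenter q' hq')]
    exact mul_mem ihq ihq'
  | inv q hq ihq =>
    rw [commutatorElement_inv_right_of_mem_center (hcenter q hq)]
    exact inv_mem ihq

theorem commutator_closure_le_of_le_center {S T : Set G} {K : Subgroup G}
    (hcenter : ⁅closure S, closure T⁆ ≤ center G) (hST : ∀ s ∈ S, ∀ t ∈ T, ⁅s, t⁆ ∈ K) :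
    ⁅closure S, closure T⁆ ≤ K := by
  have central {p q : G} (hp : p ∈ closure S) (hq : q ∈ closure T) : ⁅q, p⁆ ∈ center G := by
    rw [← commutatorElement_inv]
    exact inv_mem (hcenter (commutator_mem_commutator hp hq))
  refine commutator_le.mpr fun p hp q hq => ?_
  rw [← commutatorElement_inv]
  refine inv_mem (commutatorElement_mem_of_mem_closure (fun _ hp' => central hp' hq)
    (fun s hs => ?_) hp)
  rw [← commutatorElement_inv]
  exact inv_mem (commutatorElement_mem_of_mem_closure
    (fun q hq => hcenter (commutator_mem_commutator (subset_closure hs) hq)) (hST s hs) hq)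

theorem commutator_sup_right_eq {H K M : Subgroup G} [M.Normal] (h : ⁅H, M⁆ = ⊥) :
    ⁅H, K ⊔ M⁆ = ⁅H, K⁆ := by
  refine le_antisymm (commutator_le.mpr fun g hg u hu => ?_) (commutator_mono le_rfl le_sup_left)
  obtain ⟨k, hk, m, hm, rfl⟩ := mem_sup_of_normal_right.mp hu
  have hgm : ⁅g, m⁆ = 1 := by
    rw [← mem_bot, ← h]
    exact commutator_mem_commutator hg hm
  rw [commutatorElement_mul_right_eq_mul_conj, hgm, mul_one, mul_inv_cancel_right]
  exact commutator_mem_commutator hg hk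

theorem commutator_sup_left_eq {H K M : Subgroup G} [M.Normal] (h : ⁅M, H⁆ = ⊥) :
    ⁅K ⊔ M, H⁆ = ⁅K, H⁆ := by
  rw [commutator_comm, commutator_sup_right_eq (by rwa [commutator_comm]), commutator_comm]

theorem commutator_closure_sup_le {i j : ℕ} {S T : Set G} {K : Subgroup G}
    (h₁ : ⁅(lcs (i + 1) : Subgroup G), (lcs j : Subgroup G)⁆ = ⊥)
    (h₂ : ⁅(lcs i : Subgroup G), (lcs (j + 1) : Subgroup G)⁆ = ⊥)
    (hS : S ⊆ (lcs i : Subgroup G)) (hT : T ⊆ (lcs j : Subgroup G))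
    (hST : ∀ s ∈ S, ∀ t ∈ T, ⁅s, t⁆ ∈ K) :
    ⁅closure S ⊔ lcs (i + 1), closure T ⊔ lcs (j + 1)⁆ ≤ K := by
  have hS' : closure S ≤ lcs i := (closure_le _).mpr hS
  have hT' : closure T ≤ lcs j := (closure_le _).mpr hT
  have hcenter : ⁅(lcs i : Subgroup G), (lcs j : Subgroup G)⁆ ≤ center G := by
    rw [← commutator_top_right_eq_bot_iff_le_center]
    apply commutator_commutator_eq_bot_of_rotate
    · rw [← Subgroup.lowerCentralSeries_succ, commutator_comm]
      exact h₂
    · rw [commutator_comm ⊤, ← Subgroup.lowerCentralSeries_succ]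
      exact h₁
  rw [commutator_sup_left_eq, commutator_sup_right_eq]
  · exact commutator_closure_le_of_le_center ((commutator_mono hS' hT').trans hcenter) hST
  · exact eq_bot_mono (commutator_mono hS' le_rfl) h₂
  · exact eq_bot_mono (commutator_mono le_rfl
      (sup_le hT' (Subgroup.lowerCentralSeries_antitone ⊤ (Nat.le_succ j)))) h₁

theorem commutator_closure_sup_le_sup {i j : ℕ} {S T : Set G} {K N : Subgroup G} [N.Normal]
    (h₁ : ⁅(lcs (i + 1) : Subgroup G), (lcs j : Subgroup G)⁆ ≤ N)
    (h₂ : ⁅(lcs i : Subgroup G), (lcs (j + 1) : Subgroup G)⁆ ≤ N)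
    (hS : S ⊆ (lcs i : Subgroup G)) (hT : T ⊆ (lcs j : Subgroup G))
    (hST : ∀ s ∈ S, ∀ t ∈ T, ⁅s, t⁆ ∈ K ⊔ N) :
    ⁅closure S ⊔ lcs (i + 1), closure T ⊔ lcs (j + 1)⁆ ≤ K ⊔ N := by
  set π := QuotientGroup.mk' N
  have hπ : Function.Surjective π := QuotientGroup.mk'_surjective N
  have hKN : K ⊔ N = (K.map π).comap π := by rw [comap_map_eq, QuotientGroup.ker_mk']
  have map_eq_bot {a b : ℕ} (h : ⁅(lcs a : Subgroup G), (lcs b : Subgroup G)⁆ ≤ N) :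
      ⁅(lcs a : Subgroup (G ⧸ N)), (lcs b : Subgroup (G ⧸ N))⁆ = ⊥ := by
    rwa [← map_lowerCentralSeries_of_surjective hπ, ← map_lowerCentralSeries_of_surjective hπ,
      ← map_commutator, Subgroup.map_eq_bot_iff, QuotientGroup.ker_mk']
  have map_subset {U : Set G} {m : ℕ} (hU : U ⊆ (lcs m : Subgroup G)) :
      π '' U ⊆ (lcs m : Subgroup (G ⧸ N)) := by
    rintro _ ⟨u, hu, rfl⟩
    rw [← map_lowerCentralSeries_of_surjective hπ]
    exact mem_map_of_mem π (hU hu)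
  rw [hKN, ← map_le_iff_le_comap]
  simp only [map_commutator, Subgroup.map_sup, MonoidHom.map_closure,
    map_lowerCentralSeries_of_surjective hπ]
  refine commutator_closure_sup_le (map_eq_bot h₁) (map_eq_bot h₂) (map_subset hS)
    (map_subset hT) ?_
  rintro _ ⟨s, hs, rfl⟩ _ ⟨t, ht, rfl⟩
  have hst := hST s hs t ht
  rw [hKN] at hst
  rwa [← map_commutatorElement]

theorem commutator_closure_sup_le_sup_lowerCentralSeries {i j n : ℕ} {S T : Set G}
    {K : Subgroup G} (hn : n ≤ i + j + 2) (hS : S ⊆ (lcs i : Subgroup G))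
    (hT : T ⊆ (lcs j : Subgroup G)) (hST : ∀ s ∈ S, ∀ t ∈ T, ⁅s, t⁆ ∈ K ⊔ lcs n) :
    ⁅closure S ⊔ lcs (i + 1), closure T ⊔ lcs (j + 1)⁆ ≤ K ⊔ lcs n :=
  commutator_closure_sup_le_sup
    ((commutator_lowerCentralSeries_le _ _).trans
      (Subgroup.lowerCentralSeries_antitone ⊤ (by omega)))
    ((commutator_lowerCentralSeries_le _ _).trans
      (Subgroup.lowerCentralSeries_antitone ⊤ (by omega))) hS hT hST

theorem commutatorElement_conj_right_eq {u b c : G} (h₁ : ⁅u, ⁅b, c⁆⁆ = 1)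
    (h₂ : ⁅u, c⁆ ∈ center G) : ⁅u, b * c * b⁻¹⁆ = ⁅u, c⁆ := by
  rw [show b * c * b⁻¹ = ⁅b, c⁆ * c by group, commutatorElement_mul_right_eq_mul_conj, h₁,
    one_mul, mem_center_iff.mp h₂, mul_inv_cancel_right]

theorem jacobi_mem_lowerCentralSeries {p q r : ℕ} {x y z : G} (hx : x ∈ lcs p)
    (hy : y ∈ lcs q) (hz : z ∈ lcs r) :
    ⁅⁅x, y⁆, z⁆ * ⁅⁅y, z⁆, x⁆ * ⁅⁅z, x⁆, y⁆ ∈ lcs (p + q + r + 3) := by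
  set N : Subgroup G := lcs (p + q + r + 3)
  set π := QuotientGroup.mk' N
  have hπ : Function.Surjective π := QuotientGroup.mk'_surjective N
  have map_mem {m : ℕ} {g : G} (hg : g ∈ lcs m) : π g ∈ lcs m := by
    rw [← map_lowerCentralSeries_of_surjective hπ]
    exact mem_map_of_mem π hg
  have hQ : (lcs (p + q + r + 3) : Subgroup (G ⧸ N)) = ⊥ := by
    rw [← map_lowerCentralSeries_of_surjective hπ, Subgroup.map_eq_bot_iff,
      QuotientGroup.ker_mk']
  have hcenter : (lcs (p + q + r + 2) : Subgroup (G ⧸ N)) ≤ center (G ⧸ N) :=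
    commutator_top_right_eq_bot_iff_le_center.mp hQ
  -- In `G ⧸ N` the three conjugations in the Hall–Witt identity can be dropped.
  have conj_eq {a b c : G ⧸ N} {α β γ : ℕ} (h : α + β + γ = p + q + r) (ha : a ∈ lcs α)
      (hb : b ∈ lcs β) (hc : c ∈ lcs γ) : ⁅⁅a, b⁆, b * c * b⁻¹⁆ = ⁅⁅a, b⁆, c⁆ := by
    have hab := commutatorElement_mem_lowerCentralSeries ha hb
    apply commutatorElement_conj_right_eq
    · rw [← mem_bot, ← hQ]
      exact Subgroup.lowerCentralSeries_antitone ⊤ (by omega)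
        (commutatorElement_mem_lowerCentralSeries hab
          (commutatorElement_mem_lowerCentralSeries hb hc))
    · exact hcenter (Subgroup.lowerCentralSeries_antitone ⊤ (by omega)
        (commutatorElement_mem_lowerCentralSeries hab hc))
  rw [← QuotientGroup.ker_mk' N, MonoidHom.mem_ker]
  simp only [map_mul, map_commutatorElement]
  rw [← conj_eq (by omega) (map_mem hx) (map_mem hy) (map_mem hz),
    ← conj_eq (by omega) (map_mem hy) (map_mem hz) (map_mem hx),
    ← conj_eq (by omega) (map_mem hz) (map_mem hx) (map_mem hy)]
  exact commutatorElement_commutatorElement_conj_mul _ _ _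

theorem commutatorElement_commutatorElement_mem_sup {p q r : ℕ} {x y z : G} {S₁ S₂ : Set G}
    {K : Subgroup G} (hx : x ∈ lcs p) (hy : y ∈ lcs q) (hz : z ∈ lcs r)
    (hS₁ : S₁ ⊆ (lcs (p + r + 1) : Subgroup G)) (hS₂ : S₂ ⊆ (lcs (q + r + 1) : Subgroup G))
    (hxz : ⁅x, z⁆ ∈ closure S₁ ⊔ lcs (p + r + 2))
    (hyz : ⁅y, z⁆ ∈ closure S₂ ⊔ lcs (q + r + 2))
    (hyS₁ : ∀ s ∈ S₁, ⁅y, s⁆ ∈ K ⊔ lcs (p + q + r + 3))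
    (hxS₂ : ∀ s ∈ S₂, ⁅x, s⁆ ∈ K ⊔ lcs (p + q + r + 3)) :
    ⁅⁅x, y⁆, z⁆ ∈ K ⊔ lcs (p + q + r + 3) := by
  have single {g : G} {m : ℕ} : g ∈ closure {g} ⊔ lcs (m + 1) :=
    mem_sup_left (subset_closure rfl)
  have hx_yz : ⁅x, ⁅y, z⁆⁆ ∈ K ⊔ lcs (p + q + r + 3) :=
    commutator_closure_sup_le_sup_lowerCentralSeries (i := p) (j := q + r + 1) (by omega)
      (Set.singleton_subset_iff.mpr hx) hS₂ (by rintro _ rfl; exact hxS₂)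
      (commutator_mem_commutator single hyz)
  have hy_zx : ⁅y, ⁅z, x⁆⁆ ∈ K ⊔ lcs (p + q + r + 3) :=
    commutator_closure_sup_le_sup_lowerCentralSeries (i := q) (j := p + r + 1) (by omega)
      (Set.singleton_subset_iff.mpr hy) hS₁ (by rintro _ rfl; exact hyS₁)
      (commutator_mem_commutator single (by rw [← commutatorElement_inv]; exact inv_mem hxz))
  rw [show ⁅⁅x, y⁆, z⁆ = (⁅⁅x, y⁆, z⁆ * ⁅⁅y, z⁆, x⁆ * ⁅⁅z, x⁆, y⁆) * ⁅⁅z, x⁆, y⁆⁻¹ *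
    ⁅⁅y, z⁆, x⁆⁻¹ by group]
  simp only [commutatorElement_inv]
  exact mul_mem (mul_mem (mem_sup_right (jacobi_mem_lowerCentralSeries hx hy hz)) hy_zx) hx_yz

theorem lowerCentralSeries_succ_le_iterBracket {R : Subgroup G}
    (hR : (lcs 1 : Subgroup G) ≤ R) (c : ℕ) : (lcs (c + 1) : Subgroup G) ≤ iterBracket R c := by
  induction c with
  | zero => exact hR
  | succ c ih => exact commutator_mono ih le_rfl

end GroupTheory
namespace FC

variable {X : Type*}

theorem wt_pos (c : FC X) : 0 < c.wt := by
  induction c with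
  | of => exact Nat.one_pos
  | comm a b iha _ => exact Nat.add_pos_left iha _

theorem wt_of_lt_wt_comm (x : X) (a b : FC X) : (of x).wt < (comm a b).wt := by
  have := wt_pos a
  have := wt_pos b
  show 1 < a.wt + b.wt
  omega

theorem finite_setOf_wt_le [Finite X] (n : ℕ) : {c : FC X | c.wt ≤ n}.Finite := by
  induction n with
  | zero => exact Set.finite_empty.subset fun c hc => absurd hc (wt_pos c).not_ge
  | succ n ih =>
    refine ((Set.finite_range of).union (ih.image2 comm ih)).subset ?_
    rintro (x | ⟨a, b⟩) hc
    · exact .inl ⟨x, rfl⟩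
    · have := wt_pos a
      have := wt_pos b
      change a.wt + b.wt ≤ n + 1 at hc
      exact .inr ⟨a, show a.wt ≤ n by omega, b, show b.wt ≤ n by omega, rfl⟩

theorem val_mem_lowerCentralSeries {c : FC X} {n : ℕ} (h : c.wt = n + 1) :
    c.val ∈ (lcs n : Subgroup (FreeGroup X)) := by
  induction c generalizing n with
  | of =>
    obtain rfl : n = 0 := by simp_all [wt]
    exact mem_top _
  | comm a b iha ihb =>
    obtain ⟨i, hi⟩ := Nat.exists_eq_add_one.mpr (wt_pos a)
    obtain ⟨j, hj⟩ := Nat.exists_eq_add_one.mpr (wt_pos b)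
    obtain rfl : n = i + j + 1 := by simp only [wt] at h; omega
    exact commutatorElement_mem_lowerCentralSeries (iha hi) (ihb hj)

variable [LinearOrder X]

theorem cmp_eq_compare_wt {a b : FC X} (h : a.wt ≠ b.wt) : cmp a b = compare a.wt b.wt := by
  cases a <;> cases b <;> simp_all [cmp, wt, Ordering.then]

theorem cmp_of_wt_lt {a b : FC X} (h : a.wt < b.wt) : cmp a b = .lt := by
  rw [cmp_eq_compare_wt h.ne, compare_lt_iff_lt.mpr h]

theorem wt_le_of_cmp_lt {a b : FC X} (h : cmp a b = .lt) : a.wt ≤ b.wt := by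
  by_contra! hba
  rw [cmp_eq_compare_wt hba.ne', compare_gt_iff_gt.mpr hba] at h
  cases h

theorem cmp_comm_comm {a₁ a₂ b₁ b₂ : FC X} (h : (comm a₁ a₂).wt = (comm b₁ b₂).wt) :
    cmp (comm a₁ a₂) (comm b₁ b₂) = (cmp a₁ b₁).then (cmp a₂ b₂) := by
  simp only [cmp, compare_eq_iff_eq.mpr h]
  rfl

theorem cmp_self (a : FC X) : cmp a a = .eq := by
  induction a with
  | of x => exact compare_eq_iff_eq.mpr rfl
  | comm a b iha ihb => rw [cmp_comm_comm rfl, iha, ihb]; rfl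

theorem eq_of_cmp_eq {a b : FC X} (h : cmp a b = .eq) : a = b := by
  induction a generalizing b with
  | of x =>
    cases b with
    | of y => exact congrArg of (compare_eq_iff_eq.mp h)
    | comm => exact absurd (Ordering.then_eq_eq.mp h).2 (by decide)
  | comm a₁ a₂ ih₁ ih₂ =>
    cases b with
    | of => exact absurd (Ordering.then_eq_eq.mp h).2 (by decide)
    | comm b₁ b₂ =>
      obtain ⟨h₁, h₂⟩ := Ordering.then_eq_eq.mp (Ordering.then_eq_eq.mp h).2
      rw [ih₁ h₁, ih₂ h₂]

theorem cmp_swap (a b : FC X) : (cmp a b).swap = cmp b a := by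
  induction a generalizing b with
  | of x =>
    cases b with
    | of y => exact Std.OrientedOrd.eq_swap.symm
    | comm => simp [cmp, Ordering.swap_then, ← Std.OrientedOrd.eq_swap]
  | comm a₁ a₂ ih₁ ih₂ =>
    cases b with
    | of => simp [cmp, Ordering.swap_then, ← Std.OrientedOrd.eq_swap]
    | comm b₁ b₂ => simp [cmp, Ordering.swap_then, ← Std.OrientedOrd.eq_swap, ih₁, ih₂]

theorem cmp_trans {a b c : FC X} (hab : cmp a b = .lt) (hbc : cmp b c = .lt) :
    cmp a c = .lt := by
  induction a generalizing b c with
  | of x =>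
    rcases b with y | ⟨b₁, b₂⟩
    · rcases c with z | ⟨c₁, c₂⟩
      · exact compare_lt_iff_lt.mpr
          ((compare_lt_iff_lt.mp hab).trans (compare_lt_iff_lt.mp hbc))
      · exact cmp_of_wt_lt (wt_of_lt_wt_comm x c₁ c₂)
    · exact cmp_of_wt_lt ((wt_of_lt_wt_comm x b₁ b₂).trans_le (wt_le_of_cmp_lt hbc))
  | comm a₁ a₂ ih₁ ih₂ =>
    rcases b with y | ⟨b₁, b₂⟩
    · exact absurd (wt_le_of_cmp_lt hab) (wt_of_lt_wt_comm y a₁ a₂).not_ge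
    rcases c with z | ⟨c₁, c₂⟩
    · exact absurd (wt_le_of_cmp_lt hbc) (wt_of_lt_wt_comm z b₁ b₂).not_ge
    rcases (wt_le_of_cmp_lt hab).lt_or_eq with hlt | hwab
    · exact cmp_of_wt_lt (hlt.trans_le (wt_le_of_cmp_lt hbc))
    rcases (wt_le_of_cmp_lt hbc).lt_or_eq with hlt | hwbc
    · exact cmp_of_wt_lt (hwab ▸ hlt)
    rw [cmp_comm_comm hwab, Ordering.then_eq_lt] at hab
    rw [cmp_comm_comm hwbc, Ordering.then_eq_lt] at hbc
    rw [cmp_comm_comm (hwab.trans hwbc), Ordering.then_eq_lt]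
    rcases hab with h₁ | ⟨e₁, h₁⟩ <;> rcases hbc with h₂ | ⟨e₂, h₂⟩
    · exact .inl (ih₁ h₁ h₂)
    · exact .inl (eq_of_cmp_eq e₂ ▸ h₁)
    · exact .inl ((eq_of_cmp_eq e₁).symm ▸ h₂)
    · exact .inr ⟨(eq_of_cmp_eq e₁).symm ▸ e₂, ih₂ h₁ h₂⟩

theorem ncard_setOf_cmp_lt_lt [Finite X] {n : ℕ} {a a' : FC X} (h : cmp a a' = .lt)
    (ha' : a'.wt ≤ n) :
    {c | c.wt ≤ n ∧ cmp a' c = .lt}.ncard < {c | c.wt ≤ n ∧ cmp a c = .lt}.ncard := by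
  refine Set.ncard_lt_ncard ⟨fun c hc => ⟨hc.1, cmp_trans h hc.2⟩, fun hsub => ?_⟩
    ((finite_setOf_wt_le n).subset fun c hc => hc.1)
  have := (hsub ⟨ha', h⟩).2
  rw [cmp_self] at this
  cases this

end FC

section BasicCommutators

def basicVals (X : Type*) [LinearOrder X] (n : ℕ) : Set (FreeGroup X) :=
  {g | ∃ c : FC X, c.IsBasic ∧ c.wt = n + 1 ∧ c.val = g}

variable {X : Type*} [LinearOrder X]

theorem basicVals_subset_lowerCentralSeries (n : ℕ) :
    basicVals X n ⊆ (lcs n : Subgroup (FreeGroup X)) := by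
  rintro _ ⟨c, -, hc, rfl⟩
  exact FC.val_mem_lowerCentralSeries hc

theorem commutatorElement_val_mem_of_cmp_lt {K : Subgroup (FreeGroup X)} {c d : FC X}
    (h₁ : FC.cmp d c = .lt → ⁅c.val, d.val⁆ ∈ K) (h₂ : FC.cmp c d = .lt → ⁅d.val, c.val⁆ ∈ K) :
    ⁅c.val, d.val⁆ ∈ K := by
  rcases h : FC.cmp d c
  · exact h₁ h
  · rw [FC.eq_of_cmp_eq h, commutatorElement_self]
    exact one_mem K
  · rw [← commutatorElement_inv]
    exact inv_mem (h₂ (by rw [← FC.cmp_swap, h]; rfl))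

variable [Finite X]

theorem commutatorElement_val_mem_closure_basicVals_sup {n : ℕ} {b a : FC X} (hb : b.IsBasic)
    (ha : a.IsBasic) (hab : FC.cmp a b = .lt) (hn : b.wt + a.wt = n + 1) :
    ⁅b.val, a.val⁆ ∈ closure (basicVals X n) ⊔ lcs (n + 1) := by
  induction n using Nat.strong_induction_on generalizing b a with
  | _ n ihn =>
  induction hm : {c : FC X | c.wt ≤ n ∧ FC.cmp a c = .lt}.ncard using Nat.strong_induction_on
    generalizing b a with
  | _ m ihm =>
  have above {c d : FC X} (hc : c.IsBasic) (hd : d.IsBasic) (hac : FC.cmp a c = .lt)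
      (had : FC.cmp a d = .lt) (hcd : c.wt + d.wt = n + 1) :
      ⁅c.val, d.val⁆ ∈ closure (basicVals X n) ⊔ lcs (n + 1) := by
    have := c.wt_pos
    have := d.wt_pos
    refine commutatorElement_val_mem_of_cmp_lt (fun hdc => ?_) (fun hcd' => ?_)
    · exact ihm _ (hm ▸ FC.ncard_setOf_cmp_lt_lt had (by omega)) hc hd hdc hcd rfl
    · exact ihm _ (hm ▸ FC.ncard_setOf_cmp_lt_lt hac (by omega)) hd hc hcd' (by omega) rfl
  by_cases hside : ∀ cs ct, b = .comm cs ct → FC.cmp a ct ≠ .lt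
  · exact mem_sup_left (subset_closure ⟨.comm b a, .comm hb ha hab hside, hn, rfl⟩)
  push Not at hside
  obtain ⟨b₁, b₂, rfl, hab₂⟩ := hside
  cases hb with | comm hb₁ hb₂ h₂₁ _ => ?_
  have hab₁ := FC.cmp_trans hab₂ h₂₁
  obtain ⟨p, hp⟩ := Nat.exists_eq_add_one.mpr b₁.wt_pos
  obtain ⟨q, hq⟩ := Nat.exists_eq_add_one.mpr b₂.wt_pos
  obtain ⟨r, hr⟩ := Nat.exists_eq_add_one.mpr a.wt_pos
  obtain rfl : n = p + q + r + 2 := by simp only [FC.wt] at hn; omega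
  exact commutatorElement_commutatorElement_mem_sup (FC.val_mem_lowerCentralSeries hp)
    (FC.val_mem_lowerCentralSeries hq) (FC.val_mem_lowerCentralSeries hr)
    (basicVals_subset_lowerCentralSeries _) (basicVals_subset_lowerCentralSeries _)
    (ihn (p + r + 1) (by omega) hb₁ ha hab₁ (by omega))
    (ihn (q + r + 1) (by omega) hb₂ ha hab₂ (by omega))
    (by rintro _ ⟨e, he, hwe, rfl⟩
        exact above hb₂ he hab₂ (FC.cmp_of_wt_lt (by omega)) (by omega))
    (by rintro _ ⟨f, hf, hwf, rfl⟩
        exact above hb₁ hf hab₁ (FC.cmp_of_wt_lt (by omega)) (by omega))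

theorem lowerCentralSeries_le_closure_basicVals_sup (n : ℕ) :
    (lcs n : Subgroup (FreeGroup X)) ≤ closure (basicVals X n) ⊔ lcs (n + 1) := by
  induction n with
  | zero =>
    rw [Subgroup.lowerCentralSeries_zero, ← FreeGroup.closure_range_of]
    refine le_sup_of_le_left (closure_mono ?_)
    rintro _ ⟨x, rfl⟩
    exact ⟨.of x, .of x, rfl, rfl⟩
  | succ n ih =>
    calc (lcs (n + 1) : Subgroup (FreeGroup X))
        = ⁅lcs n, ⊤⁆ := rfl
      _ ≤ ⁅closure (basicVals X n) ⊔ lcs (n + 1), closure (Set.range FreeGroup.of) ⊔ lcs 1⁆ := by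
        rw [FreeGroup.closure_range_of]
        exact commutator_mono ih le_sup_left
      _ ≤ closure (basicVals X (n + 1)) ⊔ lcs (n + 2) := by
        refine commutator_closure_sup_le_sup_lowerCentralSeries (by omega)
          (basicVals_subset_lowerCentralSeries n) (fun _ _ => mem_top _) ?_
        rintro _ ⟨c, hc, hwc, rfl⟩ _ ⟨x, rfl⟩
        refine commutatorElement_val_mem_of_cmp_lt (d := .of x) (fun h => ?_) (fun h => ?_)
        · exact commutatorElement_val_mem_closure_basicVals_sup hc (.of x) h
            (by simp [hwc, FC.wt])
        · exact commutatorElement_val_mem_closure_basicVals_sup (.of x) hc h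
            (by simp [hwc, FC.wt]; omega)

theorem commutator_lowerCentralSeries_le_closure_sup {c₁ c₂ : ℕ} (hc : c₂ ≤ c₁)
    {A : Set (FreeGroup X)} (hA : ∀ β α : FC X, β.IsBasic → α.IsBasic → β.wt = c₁ + 1 →
      α.wt = c₂ + 1 → FC.cmp α β = .lt → ⁅β.val, α.val⁆ ∈ A) :
    ⁅(lcs c₁ : Subgroup (FreeGroup X)), lcs c₂⁆ ≤ closure A ⊔
      (⁅(lcs (c₁ + 1) : Subgroup (FreeGroup X)), lcs c₂⁆ ⊔
        ⁅(lcs c₁ : Subgroup (FreeGroup X)), lcs (c₂ + 1)⁆) := by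
  calc ⁅(lcs c₁ : Subgroup (FreeGroup X)), lcs c₂⁆
      ≤ ⁅closure (basicVals X c₁) ⊔ lcs (c₁ + 1), closure (basicVals X c₂) ⊔ lcs (c₂ + 1)⁆ :=
        commutator_mono (lowerCentralSeries_le_closure_basicVals_sup c₁)
          (lowerCentralSeries_le_closure_basicVals_sup c₂)
    _ ≤ _ := by
      refine commutator_closure_sup_le_sup le_sup_left le_sup_right
        (basicVals_subset_lowerCentralSeries c₁) (basicVals_subset_lowerCentralSeries c₂) ?_
      rintro _ ⟨β, hβ, hwβ, rfl⟩ _ ⟨α, hα, hwα, rfl⟩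
      refine mem_sup_left (commutatorElement_val_mem_of_cmp_lt
        (fun h => subset_closure (hA β α hβ hα hwβ hwα h)) (fun h => ?_))
      have := FC.wt_le_of_cmp_lt h
      exact subset_closure (hA α β hα hβ (by omega) (by omega) h)

end BasicCommutators

theorem sup_commutator_le_Hsub (k t : ℕ) (n : Fin t → ℕ) (c₁ c₂ : ℕ) :
    ⁅(lcs (c₁ + 1) : Subgroup (FreeGroup (Fin (k + t)))), lcs c₂⁆ ⊔
      ⁅(lcs c₁ : Subgroup (FreeGroup (Fin (k + t)))), lcs (c₂ + 1)⁆ ≤ Hsub k t n c₁ c₂ := by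
  have hR := lowerCentralSeries_succ_le_iterBracket (R := Rsub k t n) le_sup_left
  refine le_inf (sup_le_sup (commutator_mono (hR c₁) le_rfl) ?_) (sup_le ?_ ?_)
  · rw [commutator_comm]
    exact commutator_mono (hR c₂) le_rfl
  · exact (commutator_lowerCentralSeries_le _ _).trans
      (Subgroup.lowerCentralSeries_antitone ⊤ (by omega))
  · exact (commutator_lowerCentralSeries_le _ _).trans
      (Subgroup.lowerCentralSeries_antitone ⊤ (by omega))

theorem statement_1_general (k t : ℕ) (n : Fin t → ℕ)
    (c₁ c₂ : ℕ) (hc₁ : c₂ ≤ c₁) :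
    gammaComm k t c₁ c₂ ⊔ Hsub k t n c₁ c₂
      = Subgroup.closure (Aset k t c₁ c₂) ⊔ Hsub k t n c₁ c₂ := by
  refine le_antisymm (sup_le ?_ le_sup_right) (sup_le_sup_right ?_ _)
  · exact (commutator_lowerCentralSeries_le_closure_sup (A := Aset k t c₁ c₂) hc₁
      fun β α hβ hα hwβ hwα h => ⟨β, α, hβ, hα, hwβ, hwα, h, rfl⟩).trans
        (sup_le_sup_left (sup_commutator_le_Hsub k t n c₁ c₂) _)
  · rw [closure_le]
    rintro _ ⟨β, α, -, -, hwβ, hwα, -, rfl⟩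
    exact commutator_mem_commutator (FC.val_mem_lowerCentralSeries hwβ)
      (FC.val_mem_lowerCentralSeries hwα)

/-- With `F/R` the given free presentation of
`G ≅ ℤ^k ⊕ ℤ_{n 0} ⊕ ⋯ ⊕ ℤ_{n (t-1)}` and `1 ≤ c₂ ≤ c₁ ≤ 2c₂`, we have
`[γ_{c₁+1}(F), γ_{c₂+1}(F)] ≡ ⟨A⟩ (mod H)`, i.e. the two subgroups have the same
product with `H`. -/
theorem statement_1 (k t : ℕ) (n : Fin t → ℕ) (hn : ∀ i, 0 < n i)
    (hdvd : ∀ (i : Fin t) (h : (i : ℕ) + 1 < t), n ⟨(i : ℕ) + 1, h⟩ ∣ n i)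
    (c₁ c₂ : ℕ) (hc₂ : 1 ≤ c₂) (hc₁ : c₂ ≤ c₁) (hc : c₁ ≤ 2 * c₂) :
    gammaComm k t c₁ c₂ ⊔ Hsub k t n c₁ c₂
      = Subgroup.closure (Aset k t c₁ c₂) ⊔ Hsub k t n c₁ c₂ :=
  statement_1_general k t n c₁ c₂ hc₁

end PaperFormal
end

section
/- Let n ≥ 2 be a natural number. The group ℤ_n ⊕ ℤ_n is capable but is not 𝔖_2-capable. -/
namespace PaperFormal

open Subgroup

open scoped commutatorElement

/-! `ℤ_n ⊕ ℤ_n` is the quotient of the Heisenberg group over `ℤ_n` by its centre.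

Suppose `G ≅ E/M` is abelian, generated by the images of `a, b ∈ E`, with `M` the marginal
subgroup of `[[x₁,x₂],[x₃,x₄]]`. Then `E' ≤ M` as `G` is abelian, and marginality of `M`
says that `[M, E]` centralises `E'`. Commutators `[x, y]` are bilinear modulo
`[E, E'] ≤ [M, E] ≤ C_E(E') ∩ E'`, so every commutator lies in the subgroup generated by
`[a, b]` and `C_E(E') ∩ E'`, which is abelian. Hence `E` is metabelian, the marginal
subgroup is all of `E`, and `G` is trivial. -/

/-- The Heisenberg group over `R`: `⟨x, y, z⟩` is the matrix `[[1, x, z], [0, 1, y], [0, 0, 1]]`. -/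
structure Heis (R : Type*) where
  x : R
  y : R
  z : R

namespace Heis

variable {R : Type*} [CommRing R]

instance : Mul (Heis R) := ⟨fun p q => ⟨p.x + q.x, p.y + q.y, p.z + q.z + p.x * q.y⟩⟩
instance : One (Heis R) := ⟨⟨0, 0, 0⟩⟩
instance : Inv (Heis R) := ⟨fun p => ⟨-p.x, -p.y, p.x * p.y - p.z⟩⟩

lemma mul_def (p q : Heis R) : p * q = ⟨p.x + q.x, p.y + q.y, p.z + q.z + p.x * q.y⟩ := rfl
lemma one_def : (1 : Heis R) = ⟨0, 0, 0⟩ := rfl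
lemma inv_def (p : Heis R) : p⁻¹ = ⟨-p.x, -p.y, p.x * p.y - p.z⟩ := rfl

instance : Group (Heis R) where
  mul_assoc p q r := by
    simp only [mul_def, mk.injEq]
    exact ⟨by ring, by ring, by ring⟩
  one_mul p := by
    simp only [mul_def, one_def]
    congr 1 <;> ring
  mul_one p := by
    simp only [mul_def, one_def]
    congr 1 <;> ring
  inv_mul_cancel p := by
    simp only [mul_def, inv_def, one_def, mk.injEq]
    exact ⟨by ring, by ring, by ring⟩

def proj : Heis R →* Multiplicative (R × R) where
  toFun p := Multiplicative.ofAdd (p.x, p.y)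
  map_one' := rfl
  map_mul' _ _ := rfl

lemma proj_surjective : Function.Surjective (proj (R := R)) :=
  fun g => ⟨⟨(Multiplicative.toAdd g).1, (Multiplicative.toAdd g).2, 0⟩, rfl⟩

lemma commute_iff {p q : Heis R} : Commute p q ↔ p.x * q.y = q.x * p.y := by
  simp only [Commute, SemiconjBy, mul_def, mk.injEq, add_comm p.x, add_comm p.y, true_and]
  constructor <;> intro h <;> linear_combination h

lemma mem_center_iff {p : Heis R} : p ∈ Subgroup.center (Heis R) ↔ p.x = 0 ∧ p.y = 0 := by
  rw [Subgroup.mem_center_iff]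
  constructor
  · intro h
    have hx := commute_iff.mp (h ⟨0, 1, 0⟩)
    have hy := commute_iff.mp (h ⟨1, 0, 0⟩)
    simp only [zero_mul, one_mul, mul_one, mul_zero] at hx hy
    exact ⟨hx.symm, hy⟩
  · rintro ⟨hx, hy⟩ q
    exact commute_iff.mpr (by simp [hx, hy])

lemma ker_proj : (proj (R := R)).ker = Subgroup.center (Heis R) := by
  ext p
  rw [mem_center_iff, MonoidHom.mem_ker, ← Prod.mk_eq_zero]
  exact ofAdd_eq_one

end Heis

universe u v w

lemma capable_of_ker_eq_center {G : Type u} [Group G] {E : Type v} [Group E] (φ : E →* G)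
    (hφ : Function.Surjective φ) (hker : φ.ker = center E) : Capable.{u, max v w} G := by
  let e : ULift.{w} E ≃* E := MulEquiv.ulift
  refine ⟨ULift.{w} E, inferInstance, φ.comp e.toMonoidHom, hφ.comp e.surjective, ?_⟩
  ext x
  rw [MonoidHom.mem_ker, MonoidHom.comp_apply, ← MonoidHom.mem_ker, hker, mem_center_iff,
    mem_center_iff]
  exact ⟨fun h g => ULift.ext _ _ (h g.down), fun h g => congrArg ULift.down (h (ULift.up g))⟩

lemma capable_multiplicative_prod (R : Type u) [CommRing R] :
    Capable.{u, max u w} (Multiplicative (R × R)) :=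
  capable_of_ker_eq_center Heis.proj Heis.proj_surjective Heis.ker_proj

section Commutators

variable {E : Type*} [Group E]

lemma commutatorElement_mem_comm {H : Subgroup E} {x y : E} : ⁅x, y⁆ ∈ H ↔ ⁅y, x⁆ ∈ H := by
  rw [← inv_mem_iff, commutatorElement_inv]

variable {H : Subgroup E} (hH : ∀ p q r : E, ⁅p, ⁅q, r⁆⁆ ∈ H)
include hH

lemma mul_commutatorElement_mem {p q r : E} (hp : ⁅p, r⁆ ∈ H) (hq : ⁅q, r⁆ ∈ H) :
    ⁅p * q, r⁆ ∈ H := by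
  have h : ⁅p * q, r⁆ = ⁅p, ⁅q, r⁆⁆ * ⁅q, r⁆ * ⁅p, r⁆ := by
    simp only [commutatorElement_def]
    group
  rw [h]
  exact mul_mem (mul_mem (hH p q r) hq) hp

lemma inv_commutatorElement_mem {p r : E} (hp : ⁅p, r⁆ ∈ H) : ⁅p⁻¹, r⁆ ∈ H := by
  have h : ⁅p⁻¹, r⁆ = ⁅p⁻¹, ⁅r, p⁆⁆ * ⁅r, p⁆ := by
    simp only [commutatorElement_def]
    group
  rw [h]
  exact mul_mem (hH _ _ _) (commutatorElement_mem_comm.mp hp)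

lemma commutatorElement_mem_of_closure_eq_top {X : Set E} (hX : closure X = ⊤)
    (hXH : ∀ x ∈ X, ∀ y ∈ X, ⁅x, y⁆ ∈ H) (x y : E) : ⁅x, y⁆ ∈ H := by
  have hx : x ∈ closure X := hX ▸ mem_top x
  have hy : y ∈ closure X := hX ▸ mem_top y
  induction hx, hy using closure_induction₂ with
  | mem x y hx hy => exact hXH x hx y hy
  | one_left x _ => simp
  | one_right x _ => simp
  | mul_left x y z _ _ _ hxz hyz => exact mul_commutatorElement_mem hH hxz hyz
  | mul_right y z x _ _ _ hxy hxz =>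
    exact commutatorElement_mem_comm.mpr (mul_commutatorElement_mem hH
      (commutatorElement_mem_comm.mp hxy) (commutatorElement_mem_comm.mp hxz))
  | inv_left x y _ _ hxy => exact inv_commutatorElement_mem hH hxy
  | inv_right x y _ _ hxy =>
    exact commutatorElement_mem_comm.mpr (inv_commutatorElement_mem hH
      (commutatorElement_mem_comm.mp hxy))

end Commutators

section Metabelian

variable {E : Type*} [Group E]

theorem commute_commutatorElement_of_sup_eq_top {M : Subgroup E} {a b : E}
    (hgen : closure {a, b} ⊔ M = ⊤) (hEM : ∀ x y : E, ⁅x, y⁆ ∈ M)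
    (hMC : ∀ m ∈ M, ∀ x : E, ⁅m, x⁆ ∈ centralizer (commutator E)) (x y z w : E) :
    Commute ⁅x, y⁆ ⁅z, w⁆ := by
  set C := centralizer (commutator E : Set E)
  set D := commutator E
  have hD (x y : E) : ⁅x, y⁆ ∈ D := commutator_mem_commutator (mem_top x) (mem_top y)
  have hMCD (m x : E) (hm : m ∈ M) : ⁅m, x⁆ ∈ C ⊓ D := ⟨hMC m hm x, hD m x⟩
  set H := closure (insert ⁅a, b⁆ (C ⊓ D : Set E))
  have hCD_le : (C ⊓ D : Set E) ⊆ H := fun g hg => subset_closure (Set.mem_insert_of_mem _ hg)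
  have : IsMulCommutative H := by
    refine isMulCommutative_closure ?_
    have hCD (ν μ : E) (hν : ν ∈ C) (hμ : μ ∈ D) : ν * μ = μ * ν :=
      (mem_centralizer_iff.mp hν μ hμ).symm
    rintro g (rfl | ⟨hgC, hgD⟩) h (rfl | ⟨hhC, hhD⟩)
    · rfl
    · exact (hCD h _ hhC (hD a b)).symm
    · exact hCD g _ hgC (hD a b)
    · exact hCD g h hgC hhD
  have hmem : ∀ x y : E, ⁅x, y⁆ ∈ H := by
    refine commutatorElement_mem_of_closure_eq_top
      (fun p q r => commutatorElement_mem_comm.mp (hCD_le (hMCD _ p (hEM q r))))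
      (X := {a, b} ∪ M) (by rw [Subgroup.closure_union, closure_eq, hgen]) ?_
    have hab : ∀ x ∈ ({a, b} : Set E), ∀ y ∈ ({a, b} : Set E), ⁅x, y⁆ ∈ H := by
      have hu : ⁅a, b⁆ ∈ H := subset_closure (Set.mem_insert _ _)
      rintro x (rfl | rfl) y (rfl | rfl) <;> simp [hu, commutatorElement_mem_comm.mp hu]
    rintro x (hx | hx) y (hy | hy)
    · exact hab x hx y hy
    · exact commutatorElement_mem_comm.mpr (hCD_le (hMCD y x hy))
    · exact hCD_le (hMCD x y hx)
    · exact hCD_le (hMCD x y hx)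
  exact setLike_mul_comm (hmem x y) (hmem z w)

end Metabelian

lemma lift_deltaWord_two {E : Type*} [Group E] (f : ℕ → E) :
    FreeGroup.lift f (deltaWord 2) = ⁅⁅f 0, f 1⁆, ⁅f 2, f 3⁆⁆ := by
  simp [deltaWord, map_commutatorElement]

section Marginal

variable {E : Type*} [Group E]

lemma commute_of_mem_marginalSet {m : E} (hm : m ∈ marginalSet {deltaWord 2} E) (x y z : E) :
    Commute ⁅m, x⁆ ⁅y, z⁆ := by
  let f : ℕ → E := fun | 0 => 1 | 1 => x | 2 => y | _ => z
  simpa [f, lift_deltaWord_two, Function.update_apply, commutatorElement_eq_one_iff_commute]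
    using hm (deltaWord 2) rfl f 0

lemma commutatorElement_mem_centralizer_of_mem_marginalSet {m : E}
    (hm : m ∈ marginalSet {deltaWord 2} E) (x : E) :
    ⁅m, x⁆ ∈ centralizer (commutator E : Set E) := by
  rw [commutator_eq_closure, centralizer_closure, mem_centralizer_iff]
  rintro _ ⟨y, z, rfl⟩
  exact (commute_of_mem_marginalSet hm x y z).symm.eq

lemma marginalSet_deltaWord_two_eq_univ (h : ∀ x y z w : E, Commute ⁅x, y⁆ ⁅z, w⁆) :
    marginalSet {deltaWord 2} E = Set.univ := by
  refine Set.eq_univ_of_forall fun g v hv f i => ?_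
  rw [Set.mem_singleton_iff.mp hv, lift_deltaWord_two, lift_deltaWord_two,
    commutatorElement_eq_one_iff_commute.mpr (h _ _ _ _),
    commutatorElement_eq_one_iff_commute.mpr (h _ _ _ _)]

end Marginal

theorem not_vCapable_deltaWord_two {G : Type*} [CommGroup G] [Nontrivial G] {g₁ g₂ : G}
    (hG : closure {g₁, g₂} = ⊤) : ¬ VCapable {deltaWord 2} G := by
  rintro ⟨E, _, φ, hφ, hker⟩
  obtain ⟨a, rfl⟩ := hφ g₁
  obtain ⟨b, rfl⟩ := hφ g₂
  have hgen : closure {a, b} ⊔ φ.ker = ⊤ := by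
    rw [← comap_map_eq, MonoidHom.map_closure, Set.image_pair, hG, comap_top]
  have hEM (x y : E) : ⁅x, y⁆ ∈ φ.ker := by
    rw [MonoidHom.mem_ker, map_commutatorElement, commutatorElement_eq_one_iff_commute]
    exact Commute.all _ _
  have hMC (m : E) (hm : m ∈ φ.ker) (x : E) : ⁅m, x⁆ ∈ centralizer (commutator E) :=
    commutatorElement_mem_centralizer_of_mem_marginalSet (hker ▸ SetLike.mem_coe.mpr hm) x
  have hker_top : φ.ker = ⊤ := by
    rw [← SetLike.coe_set_eq, hker, marginalSet_deltaWord_two_eq_univ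
      (commute_commutatorElement_of_sup_eq_top hgen hEM hMC), coe_top]
  obtain ⟨g, hg⟩ := exists_ne (1 : G)
  obtain ⟨e, rfl⟩ := hφ g
  exact hg (MonoidHom.mem_ker.mp (hker_top ▸ mem_top e))

lemma closure_ofAdd_prod_eq_top (n : ℕ) :
    Subgroup.closure {Multiplicative.ofAdd ((1 : ZMod n), (0 : ZMod n)),
      Multiplicative.ofAdd ((0 : ZMod n), (1 : ZMod n))} = ⊤ := by
  refine eq_top_iff.mpr fun g _ => ?_
  obtain ⟨⟨x, y⟩, rfl⟩ := Multiplicative.ofAdd.surjective g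
  have hxy : Multiplicative.ofAdd ((1 : ZMod n), (0 : ZMod n)) ^ (x.cast : ℤ) *
      Multiplicative.ofAdd ((0 : ZMod n), (1 : ZMod n)) ^ (y.cast : ℤ) =
      Multiplicative.ofAdd (x, y) := by
    simp [← ofAdd_zsmul, ← ofAdd_add]
  rw [← hxy]
  exact mul_mem (zpow_mem (subset_closure (by simp)) _) (zpow_mem (subset_closure (by simp)) _)

/-- For `n ≥ 2`, the group `ℤ_n ⊕ ℤ_n` is capable but is not
`𝔖₂`-capable. -/
theorem statement_12 (n : ℕ) (hn : 2 ≤ n) :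
    Capable (Multiplicative (ZMod n × ZMod n)) ∧
      ¬ VCapable {deltaWord 2} (Multiplicative (ZMod n × ZMod n)) := by
  have : Fact (1 < n) := ⟨hn⟩
  exact ⟨capable_multiplicative_prod _,
    not_vCapable_deltaWord_two (closure_ofAdd_prod_eq_top n)⟩

end PaperFormal
end

section
/- Let 𝔙 be a variety of groups defined by a set of words V, and let G be a group with V(G) = 1. Let N be a normal subgroup of G, and suppose both Baer invariants 𝔙M(G) and 𝔙M(G/N) are finite. Then the natural homomorphism 𝔙M(G) → 𝔙M(G/N) is injective if and only if |𝔙M(G/N)| = |𝔙M(G)|. -/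
namespace PaperFormal

open Subgroup
open scoped commutatorElement

/-! Since `V(G) = 1`, the verbal subgroup `V(F)` lies in `R`, hence `R ∩ V(F) = S ∩ V(F)`: the
natural map `𝔙M(G) → 𝔙M(G/N)` is then induced by the identity of this common group and is
surjective. A surjection out of a finite set is injective exactly when both sides have the
same cardinality. -/

theorem map_verbal_le {α : Type*} (V : Set (FreeGroup α)) {G H : Type*} [Group G] [Group H]
    (φ : G →* H) : (verbal V G).map φ ≤ verbal V H := by
  rw [verbal, MonoidHom.map_closure]
  refine Subgroup.closure_mono ?_
  rintro _ ⟨_, ⟨v, hv, f, rfl⟩, rfl⟩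
  exact ⟨v, hv, φ ∘ f, (FreeGroup.lift_unique (φ.comp (FreeGroup.lift f)) (by simp)).symm⟩

theorem verbal_le_of_verbal_quotient_eq_bot {α : Type*} (V : Set (FreeGroup α)) {G : Type*}
    [Group G] {N : Subgroup G} [N.Normal] (h : verbal V (G ⧸ N) = ⊥) : verbal V G ≤ N := by
  rw [← QuotientGroup.ker_mk' N, ← Subgroup.map_eq_bot_iff, eq_bot_iff, ← h]
  exact map_verbal_le V _

theorem quotByHom_surjective {G : Type*} [Group G] {A A' B B' : Subgroup G} (hA : A ≤ A')
    (hB : B ≤ B') (hA' : A' ≤ A) : Function.Surjective (quotByHom hA hB) := by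
  intro y
  induction y using QuotientGroup.induction_on with
  | H a => exact ⟨QuotientGroup.mk ⟨a, hA' a.2⟩, rfl⟩

theorem baerMap_surjective {α : Type*} [DecidableEq α] (V : Set (FreeGroup α)) {F : Type*}
    [Group F] {R S : Subgroup F} (h : R ≤ S) (hVR : verbal V F ≤ R) :
    Function.Surjective (baerMap V h) :=
  quotByHom_surjective _ _ (le_inf (inf_le_right.trans hVR) inf_le_right)

theorem statement_15_general {α X : Type*} [DecidableEq α] (V : Set (FreeGroup α))
    (R S : Subgroup (FreeGroup X)) [R.Normal] (hRS : R ≤ S)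
    (hV : verbal V (FreeGroup X ⧸ R) = ⊥)
    (h1 : Finite (BaerInv V R)) :
    Function.Injective (baerMap V hRS) ↔
      Nat.card (BaerInv V S) = Nat.card (BaerInv V R) := by
  have hsurj := baerMap_surjective V hRS (verbal_le_of_verbal_quotient_eq_bot V hV)
  exact ⟨fun hinj => (Nat.card_eq_of_bijective _ ⟨hinj, hsurj⟩).symm,
    fun hcard => ((Nat.bijective_iff_surjective_and_card _).2 ⟨hsurj, hcard.symm⟩).1⟩

/-- Let `𝔙` be a variety defined by a set of words `V`, let
`G = F/R` (`F` free) be a group with `V(G) = 1`, and let `N = S/R` be a normal subgroup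
of `G`. If both Baer invariants `𝔙M(G)` and `𝔙M(G/N)` are finite, then the natural
homomorphism `𝔙M(G) → 𝔙M(G/N)` is injective if and only if
`|𝔙M(G/N)| = |𝔙M(G)|`. -/
theorem statement_15 {α X : Type*} [DecidableEq α] (V : Set (FreeGroup α))
    (R S : Subgroup (FreeGroup X)) [R.Normal] [S.Normal] (hRS : R ≤ S)
    (hV : verbal V (FreeGroup X ⧸ R) = ⊥)
    (h1 : Finite (BaerInv V R)) (h2 : Finite (BaerInv V S)) :
    Function.Injective (baerMap V hRS) ↔
      Nat.card (BaerInv V S) = Nat.card (BaerInv V R) :=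
  statement_15_general V R S hRS hV h1

end PaperFormal
end

section
/- Let 𝔙 be a variety of groups defined by a set of words V, let G be a group, and let N be a normal subgroup of G contained in the marginal subgroup V*(G). Then the natural homomorphism 𝔙M(G) → 𝔙M(G/N) is injective if and only if N ⊆ V**(G), where V**(G) = ∩{ψ(V*(E)) : ψ : E → G a surjective group homomorphism with ker ψ ⊆ V*(E)}. -/
namespace PaperFormal

open Subgroup

open scoped commutatorElement

/-- `V**(G)`: the intersection of the images `ψ(V*(E))` over all surjections
`ψ : E → G` with `ker ψ ⊆ V*(E)`. -/
def VDoubleStar {α : Type*} [DecidableEq α] (V : Set (FreeGroup α)) (G : Type u)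
    [Group G] : Set G :=
  ⋂₀ {s : Set G | ∃ (E : Type u) (_ : Group E) (ψ : E →* G),
    Function.Surjective ψ ∧ (ψ.ker : Set E) ⊆ marginalSet V E ∧
      s = ψ '' marginalSet V E}

/-!
Write `T = [R V* F]` and `T' = [S V* F]`. As `N ⊆ V*(F/R)`, `T' ≤ R ∩ V(F)`, so the kernel of
`𝔙M(F/R) → 𝔙M(F/S)` is `T'/T` and injectivity means `T' ≤ T`.
If `T' ≤ T` and `ψ : E → F/R` is onto with marginal kernel, lift `F → F/R` to `θ : F → E`.
Then `θ` kills `T`, hence `T'`, and since word values in `E` only depend on their images in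
`F/R`, this makes `θ(S)` marginal; so `N = ψ(θ(S)) ⊆ ψ(V*(E))`.
Conversely `F/T → F/R` is such a covering, and as its kernel is marginal,
`N ⊆ ψ(V*(F/T))` forces `S/T ⊆ V*(F/T)`, i.e. `T' ≤ T`.
-/

section WordMaps

variable {α : Type*} {G H : Type*} [Group G] [Group H]

lemma lift_comp_apply (φ : G →* H) (f : α → G) (v : FreeGroup α) :
    FreeGroup.lift (φ ∘ f) v = φ (FreeGroup.lift f v) :=
  (FreeGroup.lift_unique (φ.comp (FreeGroup.lift f)) (by simp)).symm

lemma exists_finset_lift_eq_lift (v : FreeGroup α) :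
    ∃ s : Finset α, ∀ f g : α → G, (∀ x ∈ s, f x = g x) →
      FreeGroup.lift f v = FreeGroup.lift g v := by
  classical
  induction v using FreeGroup.induction_on with
  | C1 => exact ⟨∅, fun f g _ => by simp⟩
  | of x => exact ⟨{x}, fun f g h => by simpa using h x (Finset.mem_singleton_self x)⟩
  | inv_of x ih =>
    obtain ⟨s, hs⟩ := ih
    exact ⟨s, fun f g h => by simp only [map_inv, hs f g h]⟩
  | mul v w ihv ihw =>
    obtain ⟨s, hs⟩ := ihv
    obtain ⟨t, ht⟩ := ihw
    refine ⟨s ∪ t, fun f g h => ?_⟩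
    rw [map_mul, map_mul, hs f g fun x hx => h x (Finset.mem_union_left t hx),
      ht f g fun x hx => h x (Finset.mem_union_right s hx)]

end WordMaps

section Marginal

variable {α : Type*} [DecidableEq α] {V : Set (FreeGroup α)} {G H : Type*} [Group G] [Group H]

lemma one_mem_marginalSet : (1 : G) ∈ marginalSet V G := by
  intro v _ f i
  rw [mul_one, Function.update_eq_self]

lemma mul_mem_marginalSet {a b : G} (ha : a ∈ marginalSet V G) (hb : b ∈ marginalSet V G) :
    a * b ∈ marginalSet V G := by
  intro v hv f i
  have hab : Function.update f i (f i * (a * b)) =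
      Function.update (Function.update f i (f i * a)) i
        (Function.update f i (f i * a) i * b) := by
    rw [Function.update_self, Function.update_idem, mul_assoc]
  rw [hab, hb v hv _ i, ha v hv f i]

lemma lift_mul_of_mem_marginalSet {v : FreeGroup α} (hv : v ∈ V) (f k : α → G)
    (hk : ∀ j, k j ∈ marginalSet V G) :
    FreeGroup.lift (fun j => f j * k j) v = FreeGroup.lift f v := by
  obtain ⟨s, hs⟩ := exists_finset_lift_eq_lift (G := G) v
  have key : ∀ t : Finset α,
      FreeGroup.lift (fun j => if j ∈ t then f j * k j else f j) v = FreeGroup.lift f v := by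
    intro t
    induction t using Finset.induction_on with
    | empty => simp
    | insert a t ha ih =>
      have hupd : (fun j => if j ∈ insert a t then f j * k j else f j) =
          Function.update (fun j => if j ∈ t then f j * k j else f j) a
            ((if a ∈ t then f a * k a else f a) * k a) := by
        funext j
        rcases eq_or_ne j a with rfl | hj
        · simp [ha]
        · simp [hj]
      rw [hupd, hk a v hv _ a, ih]
  rw [← key s]
  exact hs _ _ fun x hx => by simp [hx]

lemma lift_eq_lift_of_comp_eq (ψ : G →* H) (hker : (ψ.ker : Set G) ⊆ marginalSet V G)
    {v : FreeGroup α} (hv : v ∈ V) {f g : α → G} (hfg : ψ ∘ f = ψ ∘ g) :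
    FreeGroup.lift f v = FreeGroup.lift g v := by
  have hk : ∀ j, (f j)⁻¹ * g j ∈ marginalSet V G := fun j => hker <| by
    rw [SetLike.mem_coe, MonoidHom.mem_ker, map_mul, map_inv, inv_mul_eq_one]
    exact congrFun hfg j
  rw [← lift_mul_of_mem_marginalSet hv f _ hk]
  simp_rw [mul_inv_cancel_left]

lemma mem_marginalSet_of_map_mem_image (ψ : G →* H)
    (hker : (ψ.ker : Set G) ⊆ marginalSet V G) {g : G}
    (hg : ψ g ∈ ψ '' marginalSet V G) : g ∈ marginalSet V G := by
  obtain ⟨m, hm, hmg⟩ := hg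
  have hquot : m⁻¹ * g ∈ marginalSet V G := hker (by simp [MonoidHom.mem_ker, hmg])
  simpa using mul_mem_marginalSet hm hquot

end Marginal

section KVstar

variable {α : Type*} [DecidableEq α] (V : Set (FreeGroup α)) {G H : Type*} [Group G] [Group H]

lemma KVstar_normal (K : Subgroup G) [hK : K.Normal] : (KVstar V K).Normal := by
  refine normalizer_eq_top_iff.mp (eq_top_iff.mpr (le_normalizer_closure_iff.mpr ?_))
  rintro g - _ ⟨v, hv, f, i, r, hr, rfl⟩
  refine subset_closure ⟨v, hv, MulAut.conj g ∘ f, i, g * r * g⁻¹, hK.conj_mem r hr g, ?_⟩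
  have hupd : MulAut.conj g ∘ Function.update f i (f i * r) =
      Function.update (MulAut.conj g ∘ f) i ((MulAut.conj g ∘ f) i * (g * r * g⁻¹)) := by
    rw [Function.comp_update, Function.comp_apply, map_mul, MulAut.conj_apply g r]
  have hconj := lift_comp_apply (α := α) (MulAut.conj g).toMonoidHom
  simp only [MulEquiv.coe_toMonoidHom] at hconj
  rw [← hupd, hconj, hconj, MulAut.conj_apply, MulAut.conj_apply]
  group

lemma KVstar_le_verbal (K : Subgroup G) : KVstar V K ≤ verbal V G := by
  rw [KVstar, closure_le]
  rintro _ ⟨v, hv, f, i, r, -, rfl⟩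
  exact mul_mem (subset_closure ⟨v, hv, _, rfl⟩) (inv_mem (subset_closure ⟨v, hv, f, rfl⟩))

lemma KVstar_le_ker {K : Subgroup G} (φ : G →* H) (hK : ∀ r ∈ K, φ r ∈ marginalSet V H) :
    KVstar V K ≤ φ.ker := by
  rw [KVstar, closure_le]
  rintro _ ⟨v, hv, f, i, r, hr, rfl⟩
  have hupd : φ ∘ Function.update f i (f i * r) = Function.update (φ ∘ f) i ((φ ∘ f) i * φ r) := by
    rw [Function.comp_update, Function.comp_apply, map_mul]
  rw [SetLike.mem_coe, MonoidHom.mem_ker, map_mul, map_inv, ← lift_comp_apply, ← lift_comp_apply,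
    hupd, hK r hr v hv, mul_inv_cancel]

lemma map_mem_marginalSet_of_KVstar_le_ker {F E : Type*} [Group F] [Group E] {S : Subgroup F}
    (θ : F →* E) (ψ : E →* H) (hψθ : Function.Surjective (ψ.comp θ))
    (hker : (ψ.ker : Set E) ⊆ marginalSet V E) (hS : KVstar V S ≤ θ.ker) {s : F} (hs : s ∈ S) :
    θ s ∈ marginalSet V E := by
  intro v hv g i
  -- word values in `E` only depend on the images of the entries under `ψ`
  obtain ⟨a, ha⟩ : ∃ a, (ψ.comp θ) ∘ a = ψ ∘ g := hψθ.comp_left _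
  have hgen : θ (FreeGroup.lift (Function.update a i (a i * s)) v) = θ (FreeGroup.lift a v) := by
    have h := hS (subset_closure ⟨v, hv, a, i, s, hs, rfl⟩)
    rwa [MonoidHom.mem_ker, map_mul, map_inv, mul_inv_eq_one] at h
  have hupd : ψ ∘ Function.update g i (g i * θ s) = ψ.comp θ ∘ Function.update a i (a i * s) := by
    have hgi : ψ.comp θ (a i) = ψ (g i) := congrFun ha i
    rw [Function.comp_update, Function.comp_update, ha, map_mul, map_mul, hgi,
      MonoidHom.comp_apply]
  calc FreeGroup.lift (Function.update g i (g i * θ s)) v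
      = FreeGroup.lift (θ ∘ Function.update a i (a i * s)) v :=
        lift_eq_lift_of_comp_eq ψ hker hv hupd
    _ = θ (FreeGroup.lift a v) := by rw [lift_comp_apply, hgen]
    _ = FreeGroup.lift g v := by rw [← lift_comp_apply]; exact lift_eq_lift_of_comp_eq ψ hker hv ha

lemma KVstar_le_ker_iff {K : Subgroup G} {φ : G →* H} (hφ : Function.Surjective φ) :
    KVstar V K ≤ φ.ker ↔ ∀ r ∈ K, φ r ∈ marginalSet V H := by
  refine ⟨fun hle r hr => ?_, KVstar_le_ker V φ⟩
  refine map_mem_marginalSet_of_KVstar_le_ker V φ (MonoidHom.id H) hφ ?_ hle hr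
  rintro _ (rfl : _ = (1 : H))
  exact one_mem_marginalSet

lemma KVstar_le_self (K : Subgroup G) [K.Normal] : KVstar V K ≤ K := by
  simpa using KVstar_le_ker V (QuotientGroup.mk' K) fun r hr => by
    rw [QuotientGroup.mk'_apply, (QuotientGroup.eq_one_iff r).mpr hr]
    exact one_mem_marginalSet

end KVstar

lemma quotByHom_injective_iff {G : Type*} [Group G] {A A' B B' : Subgroup G} (hA : A ≤ A')
    (hB : B ≤ B') [B.Normal] (hB'A : B' ≤ A) :
    Function.Injective (quotByHom hA hB) ↔ B' ≤ B := by
  have hB_A : normalClosure ((B.subgroupOf A : Subgroup A) : Set A) = B.subgroupOf A :=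
    normalClosure_eq_self _
  have hmk : ∀ a : A, quotByHom hA hB (QuotientGroup.mk a) = QuotientGroup.mk (inclusion hA a) :=
    fun _ => rfl
  constructor
  · intro hinj b hb
    have himage : quotByHom hA hB (QuotientGroup.mk ⟨b, hB'A hb⟩) = 1 := by
      rw [hmk, QuotientGroup.eq_one_iff]
      exact subset_normalClosure (mem_subgroupOf.mpr hb)
    have hone := hinj (himage.trans (map_one _).symm)
    rwa [QuotientGroup.eq_one_iff, hB_A, mem_subgroupOf] at hone
  · intro hle
    rw [injective_iff_map_eq_one]
    intro x hx
    obtain ⟨a, rfl⟩ := QuotientGroup.mk_surjective x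
    rw [hmk, QuotientGroup.eq_one_iff] at hx
    have haB : inclusion hA a ∈ B.subgroupOf A' :=
      normalClosure_le_normal (fun b hb => mem_subgroupOf.mpr (hle (mem_subgroupOf.mp hb))) hx
    rw [QuotientGroup.eq_one_iff, hB_A]
    exact haB

lemma baerMap_injective_iff {α : Type*} [DecidableEq α] (V : Set (FreeGroup α)) {F : Type*}
    [Group F] {R S : Subgroup F} [R.Normal] (hRS : R ≤ S) (hSR : KVstar V S ≤ R) :
    Function.Injective (baerMap V hRS) ↔ KVstar V S ≤ KVstar V R :=
  have := KVstar_normal V R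
  quotByHom_injective_iff _ _ (le_inf hSR (KVstar_le_verbal V S))

section VDoubleStar

variable {α : Type*} [DecidableEq α] (V : Set (FreeGroup α))

lemma mem_image_of_mem_VDoubleStar {G E : Type u} [Group G] [Group E] {x : G}
    (hx : x ∈ VDoubleStar V G) (ψ : E →* G) (hψ : Function.Surjective ψ)
    (hker : (ψ.ker : Set E) ⊆ marginalSet V E) : x ∈ ψ '' marginalSet V E :=
  Set.mem_sInter.mp hx _ ⟨E, inferInstance, ψ, hψ, hker, rfl⟩

lemma KVstar_le_of_map_subset_VDoubleStar {F : Type u} [Group F] {R S : Subgroup F} [R.Normal]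
    (hN : (S.map (QuotientGroup.mk' R) : Set (F ⧸ R)) ⊆ VDoubleStar V (F ⧸ R)) :
    KVstar V S ≤ KVstar V R := by
  set T := KVstar V R
  have : T.Normal := KVstar_normal V R
  -- test `N ⊆ V**(F/R)` against the covering `F/[R V* F] → F/R`
  let ψ : F ⧸ T →* F ⧸ R := QuotientGroup.map T R (MonoidHom.id F) (KVstar_le_self V R)
  have hψ : Function.Surjective ψ :=
    QuotientGroup.map_surjective_of_surjective T R (MonoidHom.id F) QuotientGroup.mk_surjective _
  have hker : (ψ.ker : Set (F ⧸ T)) ⊆ marginalSet V (F ⧸ T) := by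
    intro e he
    obtain ⟨r, rfl⟩ := QuotientGroup.mk_surjective e
    have hr : r ∈ R := (QuotientGroup.eq_one_iff r).mp he
    exact (KVstar_le_ker_iff V (QuotientGroup.mk'_surjective T)).mp
      (QuotientGroup.ker_mk' T).ge r hr
  have hS : ∀ s ∈ S, QuotientGroup.mk' T s ∈ marginalSet V (F ⧸ T) := fun s hs =>
    mem_marginalSet_of_map_mem_image ψ hker
      (mem_image_of_mem_VDoubleStar V (hN ⟨s, hs, rfl⟩) ψ hψ hker)
  simpa using KVstar_le_ker V (QuotientGroup.mk' T) hS

lemma map_subset_VDoubleStar_of_KVstar_le {X : Type u} {R S : Subgroup (FreeGroup X)} [R.Normal]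
    (hle : KVstar V S ≤ KVstar V R) :
    (S.map (QuotientGroup.mk' R) : Set (FreeGroup X ⧸ R)) ⊆ VDoubleStar V (FreeGroup X ⧸ R) := by
  rintro _ ⟨s, hs, rfl⟩ _ ⟨E, _, ψ, hψ, hker, rfl⟩
  obtain ⟨θ, hθ⟩ : ∃ θ : FreeGroup X →* E, ψ.comp θ = QuotientGroup.mk' R :=
    ⟨FreeGroup.lift fun x => Function.surjInv hψ (QuotientGroup.mk' R (FreeGroup.of x)),
      FreeGroup.ext_hom _ _ fun x => by simp [Function.surjInv_eq]⟩
  have hR : KVstar V R ≤ θ.ker := KVstar_le_ker V θ fun r hr => hker (by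
    rw [SetLike.mem_coe, MonoidHom.mem_ker, ← MonoidHom.comp_apply, hθ, QuotientGroup.mk'_apply,
      QuotientGroup.eq_one_iff]
    exact hr)
  refine ⟨θ s, map_mem_marginalSet_of_KVstar_le_ker V θ ψ ?_ hker (hle.trans hR) hs, ?_⟩
  · rw [hθ]
    exact QuotientGroup.mk'_surjective R
  · rw [← MonoidHom.comp_apply, hθ]

end VDoubleStar

theorem statement_17_general {α : Type*} {X : Type u} [DecidableEq α] (V : Set (FreeGroup α))
    (R S : Subgroup (FreeGroup X)) [R.Normal] (hRS : R ≤ S)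
    (hmarg : ((S.map (QuotientGroup.mk' R) : Subgroup (FreeGroup X ⧸ R)) :
        Set (FreeGroup X ⧸ R)) ⊆ marginalSet V (FreeGroup X ⧸ R)) :
    Function.Injective (baerMap V hRS) ↔
      ((S.map (QuotientGroup.mk' R) : Subgroup (FreeGroup X ⧸ R)) :
        Set (FreeGroup X ⧸ R)) ⊆ VDoubleStar V (FreeGroup X ⧸ R) := by
  have hSR : KVstar V S ≤ R := by
    simpa using KVstar_le_ker V (QuotientGroup.mk' R) fun s hs => hmarg ⟨s, hs, rfl⟩
  rw [baerMap_injective_iff V hRS hSR]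
  exact ⟨map_subset_VDoubleStar_of_KVstar_le V, KVstar_le_of_map_subset_VDoubleStar V⟩

/-- Let `𝔙` be a variety defined by a set of words `V`, let
`G = F/R` (`F` free) be a group, and let `N = S/R` be a normal subgroup of `G`
contained in the marginal subgroup `V*(G)`. Then the natural homomorphism
`𝔙M(G) → 𝔙M(G/N)` is injective if and only if `N ⊆ V**(G)`. -/
theorem statement_17 {α : Type*} {X : Type u} [DecidableEq α] (V : Set (FreeGroup α))
    (R S : Subgroup (FreeGroup X)) [R.Normal] [S.Normal] (hRS : R ≤ S)
    (hmarg : ((S.map (QuotientGroup.mk' R) : Subgroup (FreeGroup X ⧸ R)) :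
        Set (FreeGroup X ⧸ R)) ⊆ marginalSet V (FreeGroup X ⧸ R)) :
    Function.Injective (baerMap V hRS) ↔
      ((S.map (QuotientGroup.mk' R) : Subgroup (FreeGroup X ⧸ R)) :
        Set (FreeGroup X ⧸ R)) ⊆ VDoubleStar V (FreeGroup X ⧸ R) :=
  statement_17_general V R S hRS hmarg

end PaperFormal
end
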